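/- arXiv:2106.00384 — 2 statements merged into one kernel-verified Lean document; each statement's English description precedes it below -/
import Mathlib

section
/- For a SIR-PH model, if on [a,b] the solution has s > 0, then (J_a - J_b)·V⁻¹·b = log(s(a)/s(b)), where J_t = i(t) + s(t)·α. -/
open Matrix Set

/-! Along a solution, `J = i + s α` satisfies `J' = -i V`, so `J · (V⁻¹ b)` has derivative
`-(i · b)`, which is also the derivative of `log s` wherever `s > 0`. Two functions with the same
derivative on `[a, c]` have the same increment there. -/

theorem sub_eq_sub_of_hasDerivAt_eq {E : Type*} [NormedAddCommGroup E] [NormedSpace ℝ E]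
    {f g f' : ℝ → E} {a b : ℝ} (hab : a ≤ b)
    (hf : ∀ x ∈ Icc a b, HasDerivAt f (f' x) x)
    (hg : ∀ x ∈ Icc a b, HasDerivAt g (f' x) x) :
    f a - f b = g a - g b := by
  have hdiff : ∀ x ∈ Icc a b, HasDerivAt (f - g) 0 x := fun x hx => by
    simpa only [sub_self] using (hf x hx).sub (hg x hx)
  have hconst := constant_of_has_deriv_right_zero (f := f - g)
    (fun x hx => (hdiff x hx).continuousAt.continuousWithinAt)
    (fun x hx => (hdiff x (Ico_subset_Icc_self hx)).hasDerivWithinAt)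
    b ⟨hab, le_rfl⟩
  simp only [Pi.sub_apply] at hconst
  exact sub_eq_sub_iff_sub_eq_sub.mp hconst.symm

theorem HasDerivAt.dotProduct_const {ι : Type*} [Fintype ι]
    {f : ℝ → ι → ℝ} {f' : ι → ℝ} {t : ℝ}
    (hf : ∀ k, HasDerivAt (fun u => f u k) (f' k) t) (w : ι → ℝ) :
    HasDerivAt (fun u => f u ⬝ᵥ w) (f' ⬝ᵥ w) t := by
  simpa only [dotProduct] using HasDerivAt.fun_sum fun k _ => (hf k).mul_const (w k)

theorem vecMul_dotProduct_inv_mulVec {ι R : Type*} [Fintype ι] [DecidableEq ι] [CommRing R]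
    {V : Matrix ι ι R} (hV : IsUnit V.det) (x b : ι → R) :
    x ᵥ* V ⬝ᵥ (V⁻¹ *ᵥ b) = x ⬝ᵥ b := by
  rw [dotProduct_mulVec, vecMul_vecMul, mul_nonsing_inv V hV, vecMul_one]

theorem sirph_log_ratio_general
    (n : ℕ) (s : ℝ → ℝ) (i : ℝ → Fin n → ℝ)
    (α b : Fin n → ℝ) (V : Matrix (Fin n) (Fin n) ℝ)
    (hV : IsUnit V.det)
    (hs : ∀ t, HasDerivAt s (-(s t * (i t ⬝ᵥ b))) t)
    (hi : ∀ t k, HasDerivAt (fun u => i u k)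
        (s t * (i t ⬝ᵥ b) * α k - Matrix.vecMul (i t) V k) t)
    (a c : ℝ) (hac : a ≤ c)
    (hspos : ∀ t ∈ Set.Icc a c, 0 < s t) :
    (Matrix.vecMul
        (fun k => (i a k + s a * α k) - (i c k + s c * α k)) V⁻¹) ⬝ᵥ b
      = Real.log (s a / s c) := by
  have hJ : ∀ t k, HasDerivAt (fun u => i u k + s u * α k) (-(i t ᵥ* V) k) t := fun t k =>
    ((hi t k).add ((hs t).mul_const (α k))).congr_deriv (by ring)
  have hJw : ∀ t, HasDerivAt (fun u => (fun k => i u k + s u * α k) ⬝ᵥ (V⁻¹ *ᵥ b))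
      (-(i t ⬝ᵥ b)) t := fun t => by
    simpa only [neg_dotProduct, vecMul_dotProduct_inv_mulVec hV] using
      HasDerivAt.dotProduct_const (f' := -(i t ᵥ* V)) (hJ t) (V⁻¹ *ᵥ b)
  have hlog : ∀ t ∈ Icc a c, HasDerivAt (fun u => Real.log (s u)) (-(i t ⬝ᵥ b)) t :=
    fun t ht => ((hs t).log (hspos t ht).ne').congr_deriv (by field_simp [(hspos t ht).ne'])
  rw [← dotProduct_mulVec,
    Real.log_div (hspos a ⟨le_rfl, hac⟩).ne' (hspos c ⟨hac, le_rfl⟩).ne']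
  exact (sub_dotProduct _ _ _).trans (sub_eq_sub_of_hasDerivAt_eq hac (fun t _ => hJw t) hlog)

/-- SIR-PH: if s > 0 on [a,b], then (J_a - J_b)·V⁻¹·b = log(s(a)/s(b)),
where J_t = i(t) + s(t)·α. -/
theorem sirph_log_ratio
    (n : ℕ) (s : ℝ → ℝ) (i : ℝ → Fin n → ℝ)
    (α b : Fin n → ℝ) (V : Matrix (Fin n) (Fin n) ℝ)
    (hα : ∀ k, 0 ≤ α k) (hα1 : ∑ k, α k = 1)
    (hV : IsUnit V.det)
    (hscont : Continuous s) (hicont : ∀ k, Continuous fun t => i t k)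
    (hs : ∀ t, HasDerivAt s (-(s t * (i t ⬝ᵥ b))) t)
    (hi : ∀ t k, HasDerivAt (fun u => i u k)
        (s t * (i t ⬝ᵥ b) * α k - Matrix.vecMul (i t) V k) t)
    (a c : ℝ) (hac : a ≤ c)
    (hspos : ∀ t ∈ Set.Icc a c, 0 < s t) :
    (Matrix.vecMul
        (fun k => (i a k + s a * α k) - (i c k + s c * α k)) V⁻¹) ⬝ᵥ b
      = Real.log (s a / s c) :=
  sirph_log_ratio_general n s i α b V hV hs hi a c hac hspos
end

section
/- For a SIR-PH model whose solution converges as t→∞ with i(∞) = 0 and s(∞) = s_∞ > 0, the final size satisfies log(s₀/s_∞) = R₀(s₀ - s_∞) + i₀·V⁻¹·b, where R₀ = α V⁻¹ b. -/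
/-!
With `c = V⁻¹ b` one has `α ⬝ᵥ c = R₀` and `(i V) ⬝ᵥ c = i ⬝ᵥ b`, so along the flow
`(i ⬝ᵥ c)' = R₀ s (i ⬝ᵥ b) - i ⬝ᵥ b = -R₀ s' + (log s)'`. Hence `i ⬝ᵥ c + R₀ s - log s` is
conserved on `[0, ∞)`; comparing its value at `t = 0` with its limit `R₀ s_∞ - log s_∞` gives the
final size relation.
-/

open Matrix Filter Topology

theorem eq_of_hasDerivAt_zero_of_tendsto {f : ℝ → ℝ} {a L : ℝ}
    (hf : ∀ t, a ≤ t → HasDerivAt f 0 t) (hL : Tendsto f atTop (𝓝 L)) : f a = L := by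
  have hconst : ∀ t, a ≤ t → f t = f a := fun t ht =>
    constant_of_has_deriv_right_zero (fun x hx => (hf x hx.1).continuousAt.continuousWithinAt)
      (fun x hx => (hf x hx.1).hasDerivWithinAt) t ⟨ht, le_rfl⟩
  refine tendsto_nhds_unique (tendsto_const_nhds.congr' ?_) hL
  filter_upwards [eventually_ge_atTop a] with t ht using (hconst t ht).symm

theorem hasDerivAt_dotProduct_const {ι 𝕜 : Type*} [Fintype ι] [NontriviallyNormedField 𝕜]
    {x : 𝕜 → ι → 𝕜} {x' : ι → 𝕜} {t : 𝕜} (hx : ∀ k, HasDerivAt (fun u => x u k) (x' k) t)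
    (c : ι → 𝕜) : HasDerivAt (fun u => x u ⬝ᵥ c) (x' ⬝ᵥ c) t :=
  HasDerivAt.fun_sum fun k _ => (hx k).mul_const (c k)

section SIRPH

variable {n : ℕ} {s : ℝ → ℝ} {i : ℝ → Fin n → ℝ} {α b : Fin n → ℝ}
  {V : Matrix (Fin n) (Fin n) ℝ} {t : ℝ}

/-- `R₀` times the paper's conserved quantity `Y + s - R₀⁻¹ log s`, where `Y = R₀⁻¹ i ⬝ᵥ V⁻¹ b`. -/
theorem hasDerivAt_sirph_conserved (hV : IsUnit V.det) (hst : 0 < s t)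
    (hs : HasDerivAt s (-(s t * (i t ⬝ᵥ b))) t)
    (hi : ∀ k, HasDerivAt (fun u => i u k) (s t * (i t ⬝ᵥ b) * α k - vecMul (i t) V k) t) :
    HasDerivAt (fun u => i u ⬝ᵥ (V⁻¹ *ᵥ b) + (vecMul α V⁻¹ ⬝ᵥ b) * s u - Real.log (s u)) 0 t := by
  have hY := hasDerivAt_dotProduct_const
    (x' := (s t * (i t ⬝ᵥ b)) • α - vecMul (i t) V) hi (V⁻¹ *ᵥ b)
  rw [sub_dotProduct, smul_dotProduct, ← dotProduct_mulVec (i t) V, mulVec_mulVec,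
    mul_nonsing_inv V hV, one_mulVec, dotProduct_mulVec α, smul_eq_mul] at hY
  refine (hY.add (hs.const_mul (vecMul α V⁻¹ ⬝ᵥ b))).sub (hs.log hst.ne') |>.congr_deriv ?_
  rw [neg_div, mul_div_cancel_left₀ _ hst.ne']
  ring

end SIRPH

theorem sirph_final_size_general
    (n : ℕ) (s : ℝ → ℝ) (i : ℝ → Fin n → ℝ)
    (α b : Fin n → ℝ) (V : Matrix (Fin n) (Fin n) ℝ)
    (hV : IsUnit V.det)
    (R₀ : ℝ) (hR₀ : R₀ = (Matrix.vecMul α V⁻¹) ⬝ᵥ b)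
    (hspos : ∀ t, 0 ≤ t → 0 < s t)
    (hs : ∀ t, 0 ≤ t → HasDerivAt s (-(s t * (i t ⬝ᵥ b))) t)
    (hi : ∀ t, 0 ≤ t → ∀ k, HasDerivAt (fun u => i u k)
        (s t * (i t ⬝ᵥ b) * α k - Matrix.vecMul (i t) V k) t)
    (sInf : ℝ) (hsInf : 0 < sInf)
    (hslim : Tendsto s atTop (nhds sInf))
    (hilim : ∀ k, Tendsto (fun t => i t k) atTop (nhds 0)) :
    Real.log (s 0 / sInf)
      = R₀ * (s 0 - sInf) + (Matrix.vecMul (i 0) V⁻¹) ⬝ᵥ b := by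
  subst hR₀
  have hY : Tendsto (fun t => i t ⬝ᵥ (V⁻¹ *ᵥ b)) atTop (𝓝 0) := by
    simpa [Function.comp_def] using
      ((continuous_id.dotProduct continuous_const).tendsto 0).comp (tendsto_pi_nhds.2 hilim)
  have hconserved := eq_of_hasDerivAt_zero_of_tendsto
    (fun t ht => hasDerivAt_sirph_conserved hV (hspos t ht) (hs t ht) (hi t ht))
    ((hY.add (hslim.const_mul _)).sub (((Real.continuousAt_log hsInf.ne').tendsto).comp hslim))
  rw [Real.log_div (hspos 0 le_rfl).ne' hsInf.ne', ← dotProduct_mulVec (i 0)]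
  simp only [zero_add] at hconserved
  linarith

/-- SIR-PH final size: log(s₀/s_∞) = R₀(s₀ - s_∞) + i₀·V⁻¹·b. -/
theorem sirph_final_size
    (n : ℕ) (s : ℝ → ℝ) (i : ℝ → Fin n → ℝ)
    (α b : Fin n → ℝ) (V : Matrix (Fin n) (Fin n) ℝ)
    (hα : ∀ k, 0 ≤ α k) (hα1 : ∑ k, α k = 1)
    (hV : IsUnit V.det)
    (R₀ : ℝ) (hR₀ : R₀ = (Matrix.vecMul α V⁻¹) ⬝ᵥ b) (hR₀pos : 0 < R₀)
    (hspos : ∀ t, 0 ≤ t → 0 < s t)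
    (hs : ∀ t, 0 ≤ t → HasDerivAt s (-(s t * (i t ⬝ᵥ b))) t)
    (hi : ∀ t, 0 ≤ t → ∀ k, HasDerivAt (fun u => i u k)
        (s t * (i t ⬝ᵥ b) * α k - Matrix.vecMul (i t) V k) t)
    (sInf : ℝ) (hsInf : 0 < sInf)
    (hslim : Tendsto s atTop (nhds sInf))
    (hilim : ∀ k, Tendsto (fun t => i t k) atTop (nhds 0)) :
    Real.log (s 0 / sInf)
      = R₀ * (s 0 - sInf) + (Matrix.vecMul (i 0) V⁻¹) ⬝ᵥ b :=
  sirph_final_size_general n s i α b V hV R₀ hR₀ hspos hs hi sInf hsInf hslim hilim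
end
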